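/- For every n ≥ 3, the derivative of the simplex generating polynomial of G_n = (C_n)ᶜ evaluated at 1 is a multiple of a Fibonacci number: Σ_c |c| = n · Fib(n-1), where the sum is over all nonempty cliques c of G_n and Fib is the Fibonacci sequence with Fib(1) = Fib(2) = 1 (Nat.fib). Equivalently, f'_{G_n}(1) = Σ_{k≥0} (k+1)·f_k(G_n) = n·Fib(n-1). -/

import Mathlib

/-- The cycle graph `C_n` on `Fin n`: `i ~ j` iff `i - j ≡ ±1 (mod n)`. -/
def cycleGraph (n : ℕ) : SimpleGraph (Fin n) where
  Adj i j := i ≠ j ∧ ((i - j : Fin n).val = 1 ∨ (j - i : Fin n).val = 1)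
  symm := by
    constructor
    intro i j h
    exact ⟨h.1.symm, h.2.symm⟩
  loopless := by
    constructor
    intro i h
    exact h.1 rfl

instance (n : ℕ) : DecidableRel (cycleGraph n).Adj :=
  fun a b => inferInstanceAs (Decidable (a ≠ b ∧ ((a - b : Fin n).val = 1 ∨ (b - a : Fin n).val = 1)))

/-- The path graph `P_n` on `Fin n`: `i ~ j` iff `|i - j| = 1`. -/
def pathGraph' (n : ℕ) : SimpleGraph (Fin n) where
  Adj i j := (i : ℕ) + 1 = (j : ℕ) ∨ (j : ℕ) + 1 = (i : ℕ)
  symm := by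
    constructor
    intro i j h
    exact h.symm
  loopless := by
    constructor
    intro i h
    rcases h with h | h <;> omega

instance (n : ℕ) : DecidableRel (pathGraph' n).Adj :=
  fun a b => inferInstanceAs (Decidable ((a : ℕ) + 1 = (b : ℕ) ∨ (b : ℕ) + 1 = (a : ℕ)))

/-- The finset of all nonempty cliques of a finite simple graph. -/
noncomputable def cliquesOf {V : Type*} [Finite V] (G : SimpleGraph V) : Finset (Finset V) := by
  classical
  letI : Fintype V := Fintype.ofFinite V
  exact Finset.univ.filter (fun s : Finset V => s.Nonempty ∧ G.IsClique (s : Set V))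

/-- The number of cliques with exactly `j` elements (the empty clique counting for `j = 0`). -/
noncomputable def cliqueCount {V : Type*} [Finite V] (G : SimpleGraph V) (j : ℕ) : ℕ := by
  classical
  letI : Fintype V := Fintype.ofFinite V
  exact (Finset.univ.filter (fun s : Finset V => G.IsClique (s : Set V) ∧ s.card = j)).card

/-- The Euler characteristic of the clique (Whitney) complex of `G`. -/
noncomputable def eulerChar {V : Type*} [Finite V] (G : SimpleGraph V) : ℤ :=
  ∑ c ∈ cliquesOf G, (-1 : ℤ) ^ (c.card + 1)

/-- The simplex generating function `f_G(t) = 1 + ∑_c t^{|c|}`. -/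
noncomputable def fgen {V : Type*} [Finite V] (G : SimpleGraph V) (t : ℝ) : ℝ :=
  1 + ∑ c ∈ cliquesOf G, t ^ c.card

open Finset
lemma mem_cliquesOf {V : Type*} [Finite V] {G : SimpleGraph V} {s : Finset V} :
    s ∈ cliquesOf G ↔ s.Nonempty ∧ G.IsClique (s : Set V) := by
  simp [cliquesOf]

lemma sub_val_one {n : ℕ} (hn : 2 ≤ n) (i j : Fin n) :
    (i - j : Fin n).val = 1 ↔ i.val = (j.val + 1) % n := by
  haveI : NeZero n := ⟨by omega⟩
  have h1 : (1 : Fin n).val = 1 := by rw [Fin.val_one']; exact Nat.mod_eq_of_lt (by omega)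
  constructor
  · intro h
    have h2 : i - j = 1 := Fin.ext (by rw [h1]; exact h)
    have h3 : i = j + 1 := by rwa [sub_eq_iff_eq_add'] at h2
    rw [h3, Fin.add_def, h1]
  · intro h
    have h2 : i = j + 1 := Fin.ext (by rw [Fin.add_def, h1]; exact h)
    rw [← sub_eq_iff_eq_add'] at h2
    rw [h2, h1]

lemma compl_cycle_adj_iff {n : ℕ} (hn : 2 ≤ n) (i j : Fin n) :
    ((cycleGraph n)ᶜ).Adj i j ↔ i ≠ j ∧ i.val ≠ (j.val + 1) % n ∧ j.val ≠ (i.val + 1) % n := by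
  have hc : (cycleGraph n).Adj i j ↔
      i ≠ j ∧ (i.val = (j.val + 1) % n ∨ j.val = (i.val + 1) % n) := by
    unfold cycleGraph
    simp only [ne_eq]
    rw [sub_val_one hn, sub_val_one hn]
  rw [SimpleGraph.compl_adj, hc]
  constructor
  · rintro ⟨hne, h⟩
    refine ⟨hne, ?_, ?_⟩ <;> (intro hcq; exact h ⟨hne, by tauto⟩)
  · rintro ⟨hne, h1, h2⟩
    exact ⟨hne, fun hcq => by tauto⟩

def noConsec (s : Finset ℕ) : Prop := ∀ i ∈ s, i + 1 ∉ s
instance : DecidablePred noConsec := fun _ => Finset.decidableDforallFinset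
def NC (m : ℕ) : Finset (Finset ℕ) := (Finset.range m).powerset.filter noConsec
lemma mem_NC {m : ℕ} {s : Finset ℕ} : s ∈ NC m ↔ (∀ i ∈ s, i < m) ∧ noConsec s := by
  simp [NC, Finset.subset_iff, Finset.mem_range]

variable {n : ℕ}

lemma clique0_bounds [NeZero n] (hn : 3 ≤ n) {s : Finset (Fin n)}
    (hs : ((cycleGraph n)ᶜ).IsClique (s : Set (Fin n))) (h0 : (0 : Fin n) ∈ s)
    {v : Fin n} (hv : v ∈ s) (hne : v ≠ 0) : 2 ≤ v.val ∧ v.val ≤ n - 2 := by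
  have adj := hs (by simpa using h0) (by simpa using hv) (Ne.symm hne)
  rw [compl_cycle_adj_iff (by omega)] at adj
  obtain ⟨-, h1, h2⟩ := adj
  simp only [Fin.val_zero] at h1 h2
  have hlt := v.isLt
  have hv0 : v.val ≠ 0 := fun h => hne (Fin.ext h)
  have hv1 : v.val ≠ 1 := by
    intro h; apply h2; rw [h]; exact (Nat.mod_eq_of_lt (by omega)).symm
  have hvn : v.val ≠ n - 1 := by
    intro h; apply h1
    rw [h, show n - 1 + 1 = n from by omega, Nat.mod_self]
  omega

lemma clique0_noconsec [NeZero n] (hn : 3 ≤ n) {s : Finset (Fin n)}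
    (hs : ((cycleGraph n)ᶜ).IsClique (s : Set (Fin n))) (h0 : (0 : Fin n) ∈ s)
    {v w : Fin n} (hv : v ∈ s) (hw : w ∈ s) (hv0 : v ≠ 0) (hw0 : w ≠ 0)
    (hne : v ≠ w) : w.val ≠ v.val + 1 := by
  have hb := clique0_bounds hn hs h0 hv hv0
  have adj := hs (by simpa using hv) (by simpa using hw) hne
  rw [compl_cycle_adj_iff (by omega)] at adj
  obtain ⟨-, -, h2⟩ := adj
  intro h
  apply h2
  rw [h, Nat.mod_eq_of_lt (by omega)]

open Fin.NatCast in
lemma N0_card [NeZero n] (hn : 3 ≤ n) :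
    ((cliquesOf ((cycleGraph n)ᶜ)).filter (fun s => (0 : Fin n) ∈ s)).card
      = (NC (n - 3)).card := by
  haveI : NeZero n := ⟨by omega⟩
  apply Finset.card_bij' (fun s _ => (s.erase 0).image (fun v : Fin n => v.val - 2))
    (fun t _ => insert (0 : Fin n) (t.image (fun k : ℕ => ((k + 2 : ℕ) : Fin n))))
  · -- left_inv
    rintro s hs
    rw [Finset.mem_filter, mem_cliquesOf] at hs
    obtain ⟨⟨-, hcl⟩, h0⟩ := hs
    rw [Finset.image_image]
    have heq : Finset.image ((fun k : ℕ => ((k + 2 : ℕ) : Fin n)) ∘ (fun v : Fin n => v.val - 2))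
        (s.erase 0) = s.erase 0 := by
      apply Finset.image_congr ?_ |>.trans (Finset.image_id)
      intro v hv
      rw [Finset.mem_coe, Finset.mem_erase] at hv
      have hb := clique0_bounds hn hcl h0 hv.2 hv.1
      simp only [Function.comp_apply, id_eq]
      rw [show v.val - 2 + 2 = v.val from by omega, Fin.cast_val_eq_self]
    rw [heq]
    exact Finset.insert_erase h0
  · -- right_inv
    rintro t ht
    rw [mem_NC] at ht
    obtain ⟨hlt, hnc⟩ := ht
    have h0not : (0 : Fin n) ∉ t.image (fun k : ℕ => ((k + 2 : ℕ) : Fin n)) := by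
      simp only [Finset.mem_image, not_exists]
      rintro k ⟨hk, hk2⟩
      have := hlt k hk
      have hval : (((k + 2 : ℕ) : Fin n)).val = k + 2 := Fin.val_cast_of_lt (by omega)
      have : ((0 : Fin n)).val = k + 2 := by rw [← hk2, hval]
      simp at this
    rw [Finset.erase_insert h0not, Finset.image_image]
    apply Finset.image_congr ?_ |>.trans (Finset.image_id)
    intro k hk
    rw [Finset.mem_coe] at hk
    have := hlt k hk
    simp only [Function.comp_apply, id_eq]
    rw [Fin.val_cast_of_lt (by omega)]
    omega
  · -- maps into NC
    rintro s hs
    rw [Finset.mem_filter, mem_cliquesOf] at hs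
    obtain ⟨⟨-, hcl⟩, h0⟩ := hs
    rw [mem_NC]
    constructor
    · intro i hi
      rw [Finset.mem_image] at hi
      obtain ⟨v, hv, rfl⟩ := hi
      rw [Finset.mem_erase] at hv
      have hb := clique0_bounds hn hcl h0 hv.2 hv.1
      omega
    · intro i hi hi1
      rw [Finset.mem_image] at hi hi1
      obtain ⟨v, hv, hveq⟩ := hi
      obtain ⟨w, hw, hweq⟩ := hi1
      rw [Finset.mem_erase] at hv hw
      have hbv := clique0_bounds hn hcl h0 hv.2 hv.1
      have hbw := clique0_bounds hn hcl h0 hw.2 hw.1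
      have hvw : v ≠ w := by
        intro h; rw [h] at hveq; omega
      exact clique0_noconsec hn hcl h0 hv.2 hw.2 hv.1 hw.1 hvw (by omega)
  · -- maps into filter
    rintro t ht
    rw [mem_NC] at ht
    obtain ⟨hlt, hnc⟩ := ht
    rw [Finset.mem_filter, mem_cliquesOf]
    have hval : ∀ k ∈ t, (((k + 2 : ℕ) : Fin n)).val = k + 2 := by
      intro k hk
      exact Fin.val_cast_of_lt (by have := hlt k hk; omega)
    refine ⟨⟨⟨0, Finset.mem_insert_self _ _⟩, ?_⟩, Finset.mem_insert_self _ _⟩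
    intro a ha b hb hne
    rw [Finset.mem_coe, Finset.mem_insert] at ha hb
    rw [compl_cycle_adj_iff (by omega)]
    refine ⟨hne, ?_, ?_⟩
    · rcases ha with rfl | ha
      · rcases hb with rfl | hb
        · exact absurd rfl hne
        · obtain ⟨k, hk, rfl⟩ := Finset.mem_image.mp hb
          rw [hval k hk, Fin.val_zero]
          have := hlt k hk
          rw [Nat.mod_eq_of_lt (by omega)]
          omega
      · obtain ⟨k, hk, rfl⟩ := Finset.mem_image.mp ha
        rcases hb with rfl | hb
        · rw [hval k hk, Fin.val_zero, Nat.mod_eq_of_lt (by omega)]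
          omega
        · obtain ⟨l, hl, rfl⟩ := Finset.mem_image.mp hb
          rw [hval k hk, hval l hl]
          have h1 := hlt k hk
          have h2 := hlt l hl
          rw [Nat.mod_eq_of_lt (by omega)]
          intro h
          have hlk : k = l + 1 := by omega
          exact hnc l hl (hlk ▸ hk)
    · rcases hb with rfl | hb
      · rcases ha with rfl | ha
        · exact absurd rfl hne
        · obtain ⟨k, hk, rfl⟩ := Finset.mem_image.mp ha
          rw [hval k hk, Fin.val_zero]
          have := hlt k hk
          rw [Nat.mod_eq_of_lt (by omega)]
          omega
      · obtain ⟨l, hl, rfl⟩ := Finset.mem_image.mp hb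
        rcases ha with rfl | ha
        · rw [hval l hl, Fin.val_zero, Nat.mod_eq_of_lt (by omega)]
          omega
        · obtain ⟨k, hk, rfl⟩ := Finset.mem_image.mp ha
          rw [hval k hk, hval l hl]
          have h1 := hlt k hk
          have h2 := hlt l hl
          rw [Nat.mod_eq_of_lt (by omega)]
          intro h
          have hlk : l = k + 1 := by omega
          exact hnc k hk (hlk ▸ hl)

variable {n : ℕ}

lemma shift_adj [NeZero n] (c a b : Fin n) :
    (cycleGraph n).Adj (a - c) (b - c) ↔ (cycleGraph n).Adj a b := by
  unfold cycleGraph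
  simp only [ne_eq]
  rw [sub_sub_sub_cancel_right, sub_sub_sub_cancel_right, sub_left_inj]

lemma clique_shift [NeZero n] (c : Fin n) {s : Finset (Fin n)}
    (hs : ((cycleGraph n)ᶜ).IsClique (s : Set (Fin n))) :
    ((cycleGraph n)ᶜ).IsClique ((s.image (· - c)) : Set (Fin n)) := by
  intro a ha b hb hne
  rw [Finset.coe_image] at ha hb
  obtain ⟨x, hx, rfl⟩ := ha
  obtain ⟨y, hy, rfl⟩ := hb
  have hxy : x ≠ y := fun h => hne (by rw [h])
  have hadj := hs hx hy hxy
  rw [SimpleGraph.compl_adj] at hadj ⊢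
  exact ⟨fun h => hne h, fun h => hadj.2 ((shift_adj c x y).mp h)⟩

lemma rot_card [NeZero n] (hn : 3 ≤ n) (v : Fin n) :
    ((cliquesOf ((cycleGraph n)ᶜ)).filter (fun s => v ∈ s)).card
      = ((cliquesOf ((cycleGraph n)ᶜ)).filter (fun s => (0 : Fin n) ∈ s)).card := by
  haveI : NeZero n := ⟨by omega⟩
  apply Finset.card_bij' (fun s _ => s.image (· - v)) (fun t _ => t.image (· + v))
  · -- left_inv
    rintro s hs
    rw [Finset.image_image]
    have : ((· + v) ∘ (· - v)) = (id : Fin n → Fin n) := by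
      funext x; simp
    rw [this, Finset.image_id]
  · -- right_inv
    rintro t ht
    rw [Finset.image_image]
    have : ((· - v) ∘ (· + v)) = (id : Fin n → Fin n) := by
      funext x; simp
    rw [this, Finset.image_id]
  · rintro s hs
    rw [Finset.mem_filter, mem_cliquesOf] at hs ⊢
    obtain ⟨⟨hne, hcl⟩, hv⟩ := hs
    refine ⟨⟨hne.image _, clique_shift v hcl⟩, ?_⟩
    exact Finset.mem_image.mpr ⟨v, hv, sub_self v⟩
  · rintro t ht
    rw [Finset.mem_filter, mem_cliquesOf] at ht ⊢
    obtain ⟨⟨hne, hcl⟩, h0⟩ := ht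
    have hcl' : ((cycleGraph n)ᶜ).IsClique ((t.image (· + v)) : Set (Fin n)) := by
      have := clique_shift (-v) hcl
      simpa [sub_neg_eq_add] using this
    refine ⟨⟨hne.image _, hcl'⟩, ?_⟩
    exact Finset.mem_image.mpr ⟨0, h0, zero_add v⟩

lemma sum_card_eq (C : Finset (Finset (Fin n))) :
    ∑ c ∈ C, c.card = ∑ v : Fin n, (C.filter (fun s => v ∈ s)).card := by
  have h1 : ∀ c : Finset (Fin n), c.card = ∑ v : Fin n, if v ∈ c then 1 else 0 := by
    intro c
    rw [Finset.sum_ite_mem, Finset.univ_inter, Finset.card_eq_sum_ones]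
  calc ∑ c ∈ C, c.card = ∑ c ∈ C, ∑ v : Fin n, if v ∈ c then 1 else 0 :=
        Finset.sum_congr rfl fun c _ => h1 c
    _ = ∑ v : Fin n, ∑ c ∈ C, if v ∈ c then 1 else 0 := Finset.sum_comm
    _ = ∑ v : Fin n, (C.filter (fun s => v ∈ s)).card :=
        Finset.sum_congr rfl fun v _ => (Finset.card_filter _ _).symm

lemma NC_card : ∀ m, (NC m).card = Nat.fib (m + 2) := by
  intro m
  induction m using Nat.strong_induction_on with
  | _ m ih =>
    match m with
    | 0 =>
        have : NC 0 = {∅} := by decide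
        rw [this]; rfl
    | 1 =>
        have : NC 1 = {∅, {0}} := by decide
        rw [this]; rfl
    | (m+2) =>
      have hsplit : ((NC (m+2)).filter (fun s => m+1 ∈ s)).card
          + ((NC (m+2)).filter (fun s => ¬ (m+1 ∈ s))).card = (NC (m+2)).card :=
        Finset.card_filter_add_card_filter_not (s := NC (m+2)) (p := fun s => m+1 ∈ s)
      have h1 : (NC (m+2)).filter (fun s => ¬ (m+1 ∈ s)) = NC (m+1) := by
        ext s
        simp only [Finset.mem_filter, mem_NC]
        constructor
        · rintro ⟨⟨hlt, hnc⟩, hmem⟩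
          refine ⟨fun i hi => ?_, hnc⟩
          have := hlt i hi
          rcases Nat.lt_or_ge i (m+1) with h | h
          · exact h
          · exfalso; apply hmem; have : i = m+1 := by omega
            rwa [this] at hi
        · rintro ⟨hlt, hnc⟩
          exact ⟨⟨fun i hi => by have := hlt i hi; omega, hnc⟩, fun h => by have := hlt _ h; omega⟩
      have h2 : ((NC (m+2)).filter (fun s => m+1 ∈ s)).card = (NC m).card := by
        apply Finset.card_bij' (fun s _ => s.erase (m+1)) (fun t _ => insert (m+1) t)
        · rintro s hs
          rw [Finset.mem_filter] at hs
          exact Finset.insert_erase hs.2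
        · rintro t ht
          rw [mem_NC] at ht
          apply Finset.erase_insert
          intro h; have := ht.1 _ h; omega
        · rintro s hs
          rw [Finset.mem_filter] at hs
          obtain ⟨hsNC, hmem⟩ := hs
          rw [mem_NC] at hsNC ⊢
          obtain ⟨hlt, hnc⟩ := hsNC
          constructor
          · intro i hi
            rw [Finset.mem_erase] at hi
            have h1 := hlt i hi.2
            have h2 : i ≠ m := by
              intro h
              exact hnc i hi.2 (by rw [h]; exact hmem)
            have := hi.1; omega
          · intro i hi h2
            exact hnc i (Finset.mem_of_mem_erase hi) (Finset.mem_of_mem_erase h2)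
        · rintro t ht
          rw [mem_NC] at ht
          obtain ⟨hlt, hnc⟩ := ht
          rw [Finset.mem_filter, mem_NC]
          refine ⟨⟨?_, ?_⟩, Finset.mem_insert_self _ _⟩
          · intro i hi
            rcases Finset.mem_insert.mp hi with h | h
            · omega
            · have := hlt i h; omega
          · intro i hi hmem
            rcases Finset.mem_insert.mp hi with h | h
            · subst h
              rcases Finset.mem_insert.mp hmem with h | h
              · omega
              · have := hlt _ h; omega
            · rcases Finset.mem_insert.mp hmem with h2 | h2
              · have := hlt _ h; omega
              · exact hnc i h h2
      have h1c := congrArg Finset.card h1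
      have e1 : (NC (m+1)).card = Nat.fib (m+3) := ih (m+1) (by omega)
      have e2 : (NC m).card = Nat.fib (m+2) := ih m (by omega)
      have e3 : Nat.fib (m+2+2) = Nat.fib (m+2) + Nat.fib (m+3) := Nat.fib_add_two
      omega


/-- `f'_{G_n}(1) = ∑_c |c| = n · Fib(n-1)` for the complement `G_n = (C_n)ᶜ`. -/
theorem deriv_fgen_at_one_eq_fib (n : ℕ) (hn : 3 ≤ n) :
    (∑ c ∈ cliquesOf ((cycleGraph n)ᶜ), c.card) = n * Nat.fib (n - 1) := by
  haveI : NeZero n := ⟨by omega⟩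
  rw [sum_card_eq]
  have hv : ∀ v : Fin n,
      (((cliquesOf ((cycleGraph n)ᶜ)).filter (fun s => v ∈ s)).card) = Nat.fib (n - 1) := by
    intro v
    rw [rot_card hn v, N0_card hn, NC_card, show n - 3 + 2 = n - 1 from by omega]
  rw [Finset.sum_congr rfl fun v _ => hv v, Finset.sum_const, Finset.card_univ,
    Fintype.card_fin, smul_eq_mul]
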